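/- In the IRM-example generating model, for any pair of indices (i,j), the Pearson correlation between the i-th coordinate of x₁ and the j-th coordinate of x₂ equals σ · Γ_{ij} / √((a_j² + b_j²)·σ² + 1), where Γ = (W_{xy} W_{yx})ᵀ, a_j² is the squared Euclidean norm of the j-th row of W_{xy} W_{yx}, and b_j² is the squared Euclidean norm of the j-th row of W_{xy}. -/

import Mathlib

/-! The coordinates `fun ω ↦ Z k ω a`, indexed by `(k, a) : Fin 3 × Fin d`, form an orthonormal family:
within one `Z k` by assumption, across different `k` by independence. Both `(x₁)_i` and `(x₂)_j`
are linear combinations of this family, with coefficient vectors `σ e_(0,i)` and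
`(σ (W_xy W_yx)_j, σ (W_xy)_j, e_j)`, so each covariance in the correlation is the dot product of
the corresponding coefficient vectors.
-/

open MeasureTheory ProbabilityTheory Matrix

/-- Covariance of two real random variables: `Cov(U,V) = E[UV] − E[U]·E[V]`. -/
noncomputable def cov {Ω : Type*} [MeasurableSpace Ω] (μ : Measure Ω) (U V : Ω → ℝ) : ℝ :=
  (∫ ω, U ω * V ω ∂μ) - (∫ ω, U ω ∂μ) * (∫ ω, V ω ∂μ)

/-- Variance of a real random variable: `Var(U) = Cov(U,U)`. -/
noncomputable def var {Ω : Type*} [MeasurableSpace Ω] (μ : Measure Ω) (U : Ω → ℝ) : ℝ :=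
  cov μ U U

/-- Pearson correlation: `Corr(U,V) = Cov(U,V) / √(Var(U)·Var(V))`. -/
noncomputable def corr {Ω : Type*} [MeasurableSpace Ω] (μ : Measure Ω) (U V : Ω → ℝ) : ℝ :=
  cov μ U V / Real.sqrt (var μ U * var μ V)

section Orthonormal

variable {Ω ι : Type*} [MeasurableSpace Ω] {μ : Measure Ω} [IsProbabilityMeasure μ]

lemma cov_eq_covariance {U V : Ω → ℝ} (hU : MemLp U 2 μ) (hV : MemLp V 2 μ) :
    cov μ U V = cov[U, V; μ] :=
  (covariance_eq_sub hU hV).symm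

variable [DecidableEq ι]

lemma cov_sum_mul_of_orthonormal [Fintype ι] {X : ι → Ω → ℝ} (hX : ∀ a, MemLp (X a) 2 μ)
    (horth : ∀ a b, cov[X a, X b; μ] = if a = b then 1 else 0) (c c' : ι → ℝ) :
    cov μ (fun ω ↦ ∑ a, c a * X a ω) (fun ω ↦ ∑ a, c' a * X a ω) = ∑ a, c a * c' a := by
  have hmemLp : ∀ c : ι → ℝ, MemLp (fun ω ↦ ∑ a, c a * X a ω) 2 μ := fun c ↦
    memLp_finsetSum _ fun a _ ↦ (hX a).const_mul (c a)
  rw [cov_eq_covariance (hmemLp c) (hmemLp c'),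
    covariance_fun_sum_fun_sum (fun a ↦ (hX a).const_mul (c a)) fun a ↦ (hX a).const_mul (c' a)]
  simp only [covariance_const_mul_left, covariance_const_mul_right, horth, mul_ite, mul_one,
    mul_zero, Finset.sum_ite_eq, Finset.mem_univ, if_true]
  exact Finset.sum_congr rfl fun a _ ↦ mul_comm _ _

variable {κ : Type*} [DecidableEq κ]

lemma covariance_coord_of_iIndepFun {Z : κ → Ω → ι → ℝ} (hindep : iIndepFun Z μ)
    (hL2 : ∀ k a, MemLp (fun ω ↦ Z k ω a) 2 μ) (hmean : ∀ k a, ∫ ω, Z k ω a ∂μ = 0)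
    (hunit : ∀ k a b, ∫ ω, Z k ω a * Z k ω b ∂μ = if a = b then 1 else 0) (p q : κ × ι) :
    cov[fun ω ↦ Z p.1 ω p.2, fun ω ↦ Z q.1 ω q.2; μ] = if p = q then 1 else 0 := by
  obtain ⟨k, a⟩ := p
  obtain ⟨l, b⟩ := q
  by_cases hkl : k = l
  · subst hkl
    rw [covariance_eq_sub (hL2 k a) (hL2 k b)]
    simp [hmean, hunit]
  · rw [if_neg (by simp [hkl])]
    exact ((hindep.indepFun hkl).comp (measurable_pi_apply a)
      (measurable_pi_apply b)).covariance_eq_zero (hL2 k a) (hL2 l b)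

end Orthonormal

theorem correlation_x1_x2_general {Ω : Type*} [MeasurableSpace Ω] (μ : Measure Ω)
    [IsProbabilityMeasure μ] {d : ℕ}
    (Z : Fin 3 → Ω → (Fin d → ℝ))
    (hindep : iIndepFun Z μ)
    (hL2 : ∀ k i, MemLp (fun ω => Z k ω i) 2 μ)
    (hmean : ∀ k i, (∫ ω, Z k ω i ∂μ) = 0)
    (hunit : ∀ k i j, (∫ ω, Z k ω i * Z k ω j ∂μ) = if i = j then 1 else 0)
    (Wyx Wxy : Matrix (Fin d) (Fin d) ℝ) (σ : ℝ) (hσ : 0 < σ)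
    (x₁ ytilde x₂ : Ω → Fin d → ℝ)
    (hx₁ : ∀ ω, x₁ ω = σ • Z 0 ω)
    (hy : ∀ ω, ytilde ω = Wyx.mulVec (x₁ ω) + σ • Z 1 ω)
    (hx₂ : ∀ ω, x₂ ω = Wxy.mulVec (ytilde ω) + Z 2 ω)
    (i j : Fin d) :
    corr μ (fun ω => x₁ ω i) (fun ω => x₂ ω j) =
      σ * ((Wxy * Wyx)ᵀ) i j /
        Real.sqrt (((∑ k, ((Wxy * Wyx) j k) ^ 2) + ∑ k, (Wxy j k) ^ 2) * σ ^ 2 + 1) := by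
  set c₁ : Fin 3 × Fin d → ℝ := Pi.single (0, i) σ
  set c₂ : Fin 3 × Fin d → ℝ := Function.uncurry ![σ • (Wxy * Wyx) j, σ • Wxy j, Pi.single j 1]
  have hx₁i : (fun ω ↦ x₁ ω i) = fun ω ↦ ∑ p, c₁ p * Z p.1 ω p.2 := by
    ext ω
    simp [c₁, hx₁, Pi.single_apply]
  have hx₂j : (fun ω ↦ x₂ ω j) = fun ω ↦ ∑ p, c₂ p * Z p.1 ω p.2 := by
    ext ω
    simp [c₂, Fintype.sum_prod_type, Fin.sum_univ_three, hx₂, hy, hx₁, mulVec_add, mulVec_smul,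
      mulVec_mulVec, mulVec, dotProduct, Finset.mul_sum, mul_assoc, Pi.single_apply]
  have horth := covariance_coord_of_iIndepFun hindep hL2 hmean hunit
  have hX : ∀ p : Fin 3 × Fin d, MemLp (fun ω ↦ Z p.1 ω p.2) 2 μ := fun p ↦ hL2 p.1 p.2
  have hcov := cov_sum_mul_of_orthonormal hX horth c₁ c₂
  have hvar₁ := cov_sum_mul_of_orthonormal hX horth c₁ c₁
  have hvar₂ := cov_sum_mul_of_orthonormal hX horth c₂ c₂
  rw [corr, var, var, hx₁i, hx₂j, hcov, hvar₁, hvar₂]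
  simp only [c₁, c₂, Pi.single_apply, ite_mul, zero_mul, Finset.sum_ite_eq', Finset.mem_univ,
    ↓reduceIte, Function.uncurry_apply_pair, cons_val', Pi.smul_apply, smul_eq_mul,
    cons_val_fin_one, cons_val_zero, cons_val_one, cons_val, mul_ite, mul_zero, mul_one,
    Fintype.sum_prod_type, Fin.sum_univ_three, transpose_apply]
  have hsq : ∀ v : Fin d → ℝ, ∑ k, σ * v k * (σ * v k) = (∑ k, v k ^ 2) * σ ^ 2 := fun v ↦ by
    rw [Finset.sum_mul]
    exact Finset.sum_congr rfl fun _ _ ↦ by ring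
  rw [hsq, hsq, ← add_mul, Real.sqrt_mul (mul_self_nonneg σ), Real.sqrt_mul_self hσ.le,
    mul_div_mul_left _ _ hσ.ne']

/-- In the IRM-example generating model, the Pearson correlation between `(x₁)_i` and `(x₂)_j`
equals `σ · Γ_{ij} / √((a_j² + b_j²)·σ² + 1)` where `Γ = (W_xy · W_yx)ᵀ`, `a_j²` is the squared
Euclidean norm of the `j`-th row of `W_xy · W_yx`, and `b_j²` is the squared Euclidean norm of the
`j`-th row of `W_xy`. -/
theorem correlation_x1_x2 {Ω : Type*} [MeasurableSpace Ω] (μ : Measure Ω)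
    [IsProbabilityMeasure μ] {d : ℕ}
    (Z : Fin 3 → Ω → (Fin d → ℝ))
    (hmeas : ∀ k, Measurable (Z k))
    (hindep : iIndepFun Z μ)
    (hL2 : ∀ k i, MemLp (fun ω => Z k ω i) 2 μ)
    (hmean : ∀ k i, (∫ ω, Z k ω i ∂μ) = 0)
    (hunit : ∀ k i j, (∫ ω, Z k ω i * Z k ω j ∂μ) = if i = j then 1 else 0)
    (Wyx Wxy : Matrix (Fin d) (Fin d) ℝ) (σ : ℝ) (hσ : 0 < σ)
    (x₁ ytilde x₂ : Ω → Fin d → ℝ)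
    (hx₁ : ∀ ω, x₁ ω = σ • Z 0 ω)
    (hy : ∀ ω, ytilde ω = Wyx.mulVec (x₁ ω) + σ • Z 1 ω)
    (hx₂ : ∀ ω, x₂ ω = Wxy.mulVec (ytilde ω) + Z 2 ω)
    (i j : Fin d) :
    corr μ (fun ω => x₁ ω i) (fun ω => x₂ ω j) =
      σ * ((Wxy * Wyx)ᵀ) i j /
        Real.sqrt (((∑ k, ((Wxy * Wyx) j k) ^ 2) + ∑ k, (Wxy j k) ^ 2) * σ ^ 2 + 1) :=
  correlation_x1_x2_general μ Z hindep hL2 hmean hunit Wyx Wxy σ hσ x₁ ytilde x₂ hx₁ hy hx₂ i j
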